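/- arXiv:1701.00928 — 7 statements merged into one kernel-verified Lean document; each statement's English description precedes it below -/
import Mathlib

section
/- A nonempty word w over a linearly ordered alphabet is a Lyndon word (i.e., w is lexicographically strictly smaller than every nontrivial rotation vu where w = uv with u, v nonempty) if and only if w has length 1 or w is lexicographically strictly smaller than every proper nonempty suffix of w. -/
open scoped Classical

/-- `k`-th power of a word: `x` repeated `k` times. -/
def listPow {α : Type*} (x : List α) (k : ℕ) : List α := (List.replicate k x).flatten

/-- A word is Lyndon if it is nonempty and lexicographically strictly smaller
than each of its proper nonempty suffixes. -/
def IsLyndon {α : Type*} [LinearOrder α] (w : List α) : Prop :=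
  w ≠ [] ∧ ∀ v : List α, v <:+ w → v ≠ [] → v ≠ w → List.Lex (· < ·) w v

/-- A word is primitive if it is nonempty and not a `k`-th power with `k ≥ 2`. -/
def Primitive' {α : Type*} (w : List α) : Prop :=
  w ≠ [] ∧ ∀ (x : List α) (k : ℕ), 2 ≤ k → w ≠ listPow x k

/-- A word is borderless if no nonempty strictly shorter word is both a prefix
and a suffix of it. -/
def Borderless {α : Type*} (w : List α) : Prop :=
  ∀ x : List α, x ≠ [] → x.length < w.length → ¬(x <+: w ∧ x <:+ w)

/-!
If `w = p v` with `p, v` nonempty and `w < v p`, compare `w` with `v` on their first `|v|`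
letters: either `w` is already smaller there, so `w < v`, or `v` is a border of `w`, i.e.
`w = p v = v s`. A bordered word cannot be smaller than both rotations `v p` and `s v`: the
first gives `s < p`, the second `p < s`, since `|p| = |s|`. Conversely, `w < v` for a proper
suffix `v` of `w = u v` gives `w < v u` because `v` is a prefix of `v u`.
-/

namespace List

variable {α : Type*} {r : α → α → Prop}

theorem lex_append_append_iff {a b c d : List α} (h : a.length = c.length) :
    Lex r (a ++ b) (c ++ d) ↔ Lex r a c ∨ a = c ∧ Lex r b d := by
  induction a generalizing c with
  | nil =>
    obtain rfl : c = [] := length_eq_zero_iff.1 h.symm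
    simp
  | cons x a ih =>
    obtain ⟨y, c, rfl⟩ := exists_cons_of_length_eq_add_one h.symm
    simp only [cons_append, cons_lex_cons_iff, cons.injEq, ih (Nat.succ_injective h)]
    tauto

theorem not_lex_rotations_of_border [Std.Asymm r] {w p s v : List α} (hwp : w = p ++ v)
    (hws : w = v ++ s) (hvp : Lex r w (v ++ p)) (hsv : Lex r w (s ++ v)) : False := by
  have hlen : p.length = s.length := by
    have := congrArg length (hwp.symm.trans hws)
    simp only [length_append] at this
    omega
  have hsp : Lex r s p := by
    rw [hws, lex_append_append_iff rfl] at hvp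
    exact (hvp.resolve_left (irrefl v)).2
  rw [hwp, lex_append_append_iff hlen] at hsv
  rcases hsv with hps | ⟨-, hvv⟩
  · exact asymm hps hsp
  · exact irrefl v hvv

theorem lex_suffix_of_lex_rotations [Std.Asymm r] {w p v : List α} (hw : w = p ++ v)
    (hp : p ≠ []) (hv : v ≠ [])
    (H : ∀ x y : List α, w = x ++ y → x ≠ [] → y ≠ [] → Lex r w (y ++ x)) :
    Lex r w v := by
  obtain ⟨a, s, hsplit, ha⟩ : ∃ a s, w = a ++ s ∧ a.length = v.length :=
    ⟨_, _, (take_append_drop v.length w).symm, by simp [hw]⟩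
  have hrot := H p v hw hp hv
  rw [hsplit, lex_append_append_iff ha] at hrot
  rcases hrot with hlt | ⟨rfl, -⟩
  · rw [hsplit]
    simpa using (lex_append_append_iff (b := s) (d := []) ha).2 (.inl hlt)
  · have hs : s ≠ [] := by
      rintro rfl
      rw [append_nil, hw, append_left_eq_self] at hsplit
      exact hp hsplit
    exact (not_lex_rotations_of_border hw hsplit (H p a hw hp hv) (H a s hsplit hv hs)).elim

end List

theorem lyndon_rotation_iff_suffix_general {α : Type*} [LinearOrder α] (w : List α) :
    (∀ u v : List α, w = u ++ v → u ≠ [] → v ≠ [] → List.Lex (· < ·) w (v ++ u)) ↔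
      (w.length = 1 ∨
        ∀ v : List α, v <:+ w → v ≠ [] → v ≠ w → List.Lex (· < ·) w v) := by
  constructor
  · intro H
    right
    rintro v ⟨p, hw⟩ hv hvw
    have hp : p ≠ [] := fun hp => hvw (by simp [← hw, hp])
    exact List.lex_suffix_of_lex_rotations hw.symm hp hv H
  · rintro (hlen | H) u v rfl hu hv
    · have := List.length_pos_iff.2 hu
      have := List.length_pos_iff.2 hv
      simp only [List.length_append] at hlen
      omega
    · have hvw : v ≠ u ++ v := fun h => hu (List.append_left_eq_self.1 h.symm)
      exact (H v (List.suffix_append u v) hv hvw).append_right _ u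

theorem lyndon_rotation_iff_suffix {α : Type*} [LinearOrder α] (w : List α) (hw : w ≠ []) :
    (∀ u v : List α, w = u ++ v → u ≠ [] → v ≠ [] → List.Lex (· < ·) w (v ++ u)) ↔
      (w.length = 1 ∨
        ∀ v : List α, v <:+ w → v ≠ [] → v ≠ w → List.Lex (· < ·) w v) :=
  lyndon_rotation_iff_suffix_general w
end

section
/- The word w = a_1^{k_1} a_2^{k_2} ⋯ a_σ^{k_σ} (with each k_i ≥ 1 and Σ k_i = n), consisting of blocks of increasing letters, has exactly C(n+1, 2) − Σ_{i=1}^σ C(k_i+1, 2) + σ distinct Lyndon factors. -/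
open scoped Classical

/-! Let `u` be a word all of whose letters exceed `a`. A Lyndon factor of `a^k u` lies in `u`,
or is the letter `a` (for `j ≥ 2`, `a^j` is not smaller than its proper suffix `a^(j-1)`,
which is a prefix of it), or straddles the boundary as `a^j p` with `1 ≤ j ≤ k` and `p` a
nonempty prefix of `u`. Every such `a^j p` is Lyndon: a proper suffix either starts with a
letter larger than `a`, or is `a^i p` with `i < j`, which loses to `a^j p` at position `i + 1`.
So prepending the block adds `k |u| + 1` Lyndon factors, and induction over the blocks, with
`C(k + |u| + 1, 2) = C(k + 1, 2) + C(|u| + 1, 2) + k |u|`, gives the formula. -/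

open List

section Lyndon

variable {α : Type*} [LinearOrder α]

def lyndonFactors (w : List α) : Set (List α) := {v | v <:+: w ∧ IsLyndon v}

lemma isLyndon_singleton (a : α) : IsLyndon [a] :=
  ⟨cons_ne_nil a [], fun _ hv hne hva =>
    absurd (hv.eq_of_length (le_antisymm hv.length_le (length_pos_iff.2 hne))) hva⟩

lemma not_lex_replicate_succ (a : α) (m : ℕ) :
    ¬ Lex (· < ·) (replicate (m + 1) a) (replicate m a) := by
  induction m with
  | zero => exact not_lex_nil
  | succ m ih => rwa [replicate_succ, replicate_succ, lex_cons_iff]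

lemma isLyndon_replicate_iff {a : α} {j : ℕ} : IsLyndon (replicate j a) ↔ j = 1 := by
  refine ⟨fun ⟨hne, hlex⟩ => ?_, fun h => h ▸ isLyndon_singleton a⟩
  obtain _ | _ | m := j
  · exact absurd rfl hne
  · rfl
  · exact absurd (hlex (replicate (m + 1) a) ⟨[a], rfl⟩ (by simp) (by simp))
      (not_lex_replicate_succ a _)

lemma isLyndon_replicate_append {a : α} {j : ℕ} {p : List α} (hj : j ≠ 0) (hp : p ≠ [])
    (ha : ∀ x ∈ p, a < x) : IsLyndon (replicate j a ++ p) := by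
  obtain ⟨b, p, rfl⟩ := exists_cons_of_ne_nil hp
  refine ⟨by simp, fun v ⟨t, ht⟩ hne hvw => ?_⟩
  rcases append_eq_append_iff.mp ht with ⟨s, hrep, rfl⟩ | ⟨s, rfl, hs⟩
  · obtain ⟨hlen, -, hs⟩ := append_eq_replicate_iff.mp hrep.symm
    rw [hs] at hvw ⊢
    obtain ⟨d, hd⟩ : ∃ d, j = s.length + (d + 1) := by
      refine Nat.exists_eq_add_of_lt (lt_of_le_of_ne (by omega) fun h => hvw ?_)
      rw [h]
    rw [hd, replicate_add, append_assoc]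
    exact Lex.append_left _ (Lex.rel (ha b mem_cons_self)) _
  · obtain ⟨c, v, rfl⟩ := exists_cons_of_ne_nil hne
    obtain ⟨j, rfl⟩ := Nat.exists_eq_succ_of_ne_zero hj
    exact Lex.rel (ha c (hs ▸ mem_append_right s mem_cons_self))

lemma finite_lyndonFactors (w : List α) : (lyndonFactors w).Finite :=
  (finite_toSet w.sublists).subset fun _ hv => mem_sublists.2 hv.1.sublist

lemma lyndonFactors_replicate_append {a : α} {k : ℕ} {u : List α} (hk : k ≠ 0)
    (ha : ∀ x ∈ u, a < x) :
    lyndonFactors (replicate k a ++ u) = insert [a] (lyndonFactors u ∪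
      (fun jm : ℕ × ℕ => replicate jm.1 a ++ u.take jm.2) ''
        Set.Icc 1 k ×ˢ Set.Icc 1 u.length) := by
  ext v
  simp only [lyndonFactors, Set.mem_insert_iff, Set.mem_union, Set.mem_ofPred_eq, Set.mem_image,
    Set.mem_prod, Set.mem_Icc, Prod.exists]
  constructor
  · rintro ⟨hv, hlyn⟩
    rcases infix_append_iff_ne_nil.mp hv with hv | hv | ⟨s, p, hs, hp, rfl, hsuf, hpre⟩
    · obtain ⟨-, hrep⟩ := infix_replicate_iff.mp hv
      rw [hrep, isLyndon_replicate_iff] at hlyn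
      rw [hrep, hlyn]
      exact Or.inl rfl
    · exact Or.inr (Or.inl ⟨hv, hlyn⟩)
    · obtain ⟨hsk, hrep⟩ := suffix_replicate_iff.mp hsuf
      refine Or.inr (Or.inr ⟨s.length, p.length,
        ⟨⟨length_pos_iff.2 hs, hsk⟩, length_pos_iff.2 hp, hpre.length_le⟩, ?_⟩)
      rw [← prefix_iff_eq_take.mp hpre, ← hrep]
  · rintro (rfl | hv | ⟨j, m, ⟨⟨hj, hjk⟩, hm, hmu⟩, rfl⟩)
    · exact ⟨infix_append_of_infix_left (infix_replicate_iff.2 ⟨by simp; omega, rfl⟩),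
        isLyndon_singleton a⟩
    · exact ⟨infix_append_of_infix_right hv.1, hv.2⟩
    · refine ⟨infix_append_iff.2 (Or.inr (Or.inr ⟨_, _, rfl, ?_, take_prefix m u⟩)), ?_⟩
      · exact suffix_replicate_iff.2 ⟨by simpa using hjk, by simp⟩
      · exact isLyndon_replicate_append (by omega) (ne_nil_of_length_pos (by simp; omega))
          fun x hx => ha x (mem_of_mem_take hx)

lemma ncard_lyndonFactors_replicate_append {a : α} {k : ℕ} {u : List α} (hk : k ≠ 0)
    (ha : ∀ x ∈ u, a < x) :
    (lyndonFactors (replicate k a ++ u)).ncard = (lyndonFactors u).ncard + k * u.length + 1 := by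
  have hau : a ∉ u := fun h => lt_irrefl a (ha a h)
  rw [lyndonFactors_replicate_append hk ha]
  set f := fun jm : ℕ × ℕ => replicate jm.1 a ++ u.take jm.2
  set I := Set.Icc 1 k ×ˢ Set.Icc 1 u.length
  have hinj : Set.InjOn f I := by
    rintro ⟨j, m⟩ ⟨-, hm, hmu⟩ ⟨j', m'⟩ ⟨-, hm', hmu'⟩ h
    have hcount := congrArg (count a) h
    simp only [f, count_append, count_replicate_self,
      count_eq_zero_of_not_mem (fun h => hau (mem_of_mem_take h))] at hcount
    subst hcount
    have hlen := congrArg length (append_cancel_left h)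
    simp only [length_take] at hlen
    exact Prod.ext rfl (by omega)
  have hdisj : Disjoint (lyndonFactors u) (f '' I) := by
    refine Set.disjoint_right.2 ?_
    rintro _ ⟨⟨j, m⟩, ⟨⟨hj, -⟩, -⟩, rfl⟩ hv
    exact hau (hv.1.subset (mem_append_left _ (mem_replicate.2 ⟨by omega, rfl⟩)))
  have hsingle : [a] ∉ lyndonFactors u ∪ f '' I := by
    rintro (hv | ⟨⟨j, m⟩, ⟨⟨hj, -⟩, hm, hmu⟩, hjm⟩)
    · exact hau (hv.1.subset (mem_singleton_self a))
    · have hlen := congrArg length hjm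
      simp only [f, length_append, length_replicate, length_take, length_singleton] at hlen
      omega
  have hfin : (f '' I).Finite := ((Set.finite_Icc 1 k).prod (Set.finite_Icc _ _)).image f
  rw [Set.ncard_insert_of_notMem hsingle ((finite_lyndonFactors u).union hfin),
    Set.ncard_union_eq hdisj (finite_lyndonFactors u) hfin, hinj.ncard_image, Set.ncard_prod,
    Set.ncard_Icc_nat, Set.ncard_Icc_nat]
  simp

end Lyndon

lemma Nat.add_add_one_choose_two (m n : ℕ) :
    (m + n + 1).choose 2 = (m + 1).choose 2 + (n + 1).choose 2 + m * n := by
  induction n with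
  | zero => simp
  | succ n ih =>
    rw [← add_assoc, Nat.choose_succ_succ', ih, Nat.choose_succ_succ' (n + 1),
      Nat.choose_one_right, Nat.choose_one_right]
    ring

def blockWord {α : Type*} (l : List (α × ℕ)) : List α := l.flatMap fun b => replicate b.2 b.1

theorem ncard_lyndonFactors_blockWord {α : Type*} [LinearOrder α] (l : List (α × ℕ))
    (hl : l.Pairwise fun b c => b.1 < c.1) (hpos : ∀ b ∈ l, b.2 ≠ 0) :
    (lyndonFactors (blockWord l)).ncard + (l.map fun b => (b.2 + 1).choose 2).sum =
      ((blockWord l).length + 1).choose 2 + l.length := by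
  induction l with
  | nil =>
    have hnil : lyndonFactors ([] : List α) = ∅ :=
      Set.eq_empty_of_forall_notMem fun v hv => hv.2.1 (infix_nil.1 hv.1)
    simp [blockWord, hnil]
  | cons b l ih =>
    obtain ⟨a, k⟩ := b
    rw [pairwise_cons] at hl
    have ha : ∀ x ∈ blockWord l, a < x := by
      intro x hx
      obtain ⟨c, hc, hx⟩ := mem_flatMap.1 hx
      exact eq_of_mem_replicate hx ▸ hl.1 c hc
    have ih := ih hl.2 fun c hc => hpos c (mem_cons_of_mem _ hc)
    rw [show blockWord ((a, k) :: l) = replicate k a ++ blockWord l from flatMap_cons,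
      ncard_lyndonFactors_replicate_append (hpos _ mem_cons_self) ha, length_append,
      length_replicate, Nat.add_add_one_choose_two, map_cons, sum_cons, length_cons]
    linarith

theorem block_word_lyndon_count (σ n : ℕ) (k : Fin σ → ℕ)
    (hk : ∀ i, 1 ≤ k i) (hsum : (∑ i, k i) = n) :
    (({v : List (Fin σ) | v <:+: (List.ofFn fun i : Fin σ => List.replicate (k i) i).flatten ∧
        IsLyndon v}.ncard : ℤ)) =
      ((n + 1).choose 2 : ℤ) - (∑ i, ((k i + 1).choose 2 : ℤ)) + (σ : ℤ) := by
  set l := List.ofFn fun i : Fin σ => (i, k i)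
  have hword : blockWord l = (List.ofFn fun i : Fin σ => List.replicate (k i) i).flatten := by
    simp [blockWord, l, flatMap, map_ofFn, Function.comp_def]
  have hlen : (blockWord l).length = n := by
    simp [hword, sum_ofFn, hsum]
  have hcount := ncard_lyndonFactors_blockWord l (pairwise_ofFn.2 fun _ _ hij => hij)
    (by simpa [l] using fun i => Nat.one_le_iff_ne_zero.1 (hk i))
  rw [hlen, hword] at hcount
  simp only [l, map_ofFn, sum_ofFn, length_ofFn, Function.comp_def] at hcount
  change ((lyndonFactors _).ncard : ℤ) = _
  zify at hcount
  linarith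
end

section
/- The total number of Lyndon factor occurrences, summed over all words of length n over an alphabet of size σ, equals M(σ, n) = Σ_{m=1}^{n} ((n − m + 1)/m)·σ^{n−m}·Σ_{d | m} μ(m/d)·σ^d. -/
open scoped Classical

/-!
Counting occurrences by position and length, a factor of length `m` sits at `n - m + 1`
positions, and the other `n - m` letters are free; so the total is
`∑ m, (n - m + 1) σ^(n-m) L(m)` with `L(m)` the number of Lyndon words of length `m`, and it
remains to show `m L(m) = ∑_{d ∣ m} μ(m/d) σ^d`.

A word is primitive iff it is fixed by no rotation other than multiples of its length (the
rotations fixing a word are closed under `gcd`). Hence a primitive word has `m` distinct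
rotations, the least of which is Lyndon, while two Lyndon words are never proper rotations of
each other: there are `m L(m)` primitive words of length `m`. Every nonempty word is a power of
a unique primitive word, so summing the number of primitive words of length `d` over `d ∣ m`
gives `σ^m`, and Möbius inversion gives the claim.
-/

open Finset

variable {α : Type*}

section Powers

@[simp] theorem listPow_zero (x : List α) : listPow x 0 = [] := rfl

theorem listPow_succ (x : List α) (k : ℕ) : listPow x (k + 1) = x ++ listPow x k := by
  simp [listPow, List.replicate_succ]

theorem listPow_succ' (x : List α) (k : ℕ) : listPow x (k + 1) = listPow x k ++ x := by
  simp [listPow, List.replicate_succ']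

@[simp] theorem listPow_nil (k : ℕ) : listPow ([] : List α) k = [] := by
  simp [listPow]

@[simp] theorem listPow_one (x : List α) : listPow x 1 = x := by
  simp [listPow]

@[simp] theorem length_listPow (x : List α) (k : ℕ) : (listPow x k).length = k * x.length := by
  induction k with
  | zero => simp
  | succ k ih => simp [listPow_succ, ih, Nat.succ_mul, Nat.add_comm]

theorem listPow_add (x : List α) (a b : ℕ) : listPow x (a + b) = listPow x a ++ listPow x b := by
  rw [listPow, listPow, listPow, List.replicate_add, List.flatten_append]

theorem listPow_mul (x : List α) (a b : ℕ) : listPow (listPow x a) b = listPow x (a * b) := by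
  induction b with
  | zero => simp
  | succ b ih => rw [listPow_succ, ih, Nat.mul_succ, Nat.add_comm, listPow_add]

theorem getElem_listPow (x : List α) (k i : ℕ) (h : i < (listPow x k).length) :
    (listPow x k)[i] =
      x[i % x.length]'(Nat.mod_lt _ (Nat.pos_of_ne_zero fun h0 => by simp [h0] at h)) := by
  induction k generalizing i with
  | zero => simp at h
  | succ k ih =>
    simp only [listPow_succ]
    rcases lt_or_ge i x.length with hi | hi
    · simp [List.getElem_append_left hi, Nat.mod_eq_of_lt hi]
    · rw [List.getElem_append_right hi, ih]
      simp [Nat.mod_eq_sub_mod hi]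

theorem take_length_listPow (x : List α) {k : ℕ} (hk : k ≠ 0) :
    (listPow x k).take x.length = x := by
  obtain ⟨k, rfl⟩ := Nat.exists_eq_succ_of_ne_zero hk
  simp [listPow_succ]

theorem rotate_listPow (x : List α) (j k : ℕ) :
    (listPow x j).rotate k = listPow (x.rotate k) j := by
  refine List.ext_getElem (by simp) fun i h₁ h₂ => ?_
  simp only [List.getElem_rotate, getElem_listPow, length_listPow, List.length_rotate]
  congr 1
  rw [Nat.mod_mod_of_dvd _ (Dvd.intro_left _ rfl), Nat.mod_add_mod]

end Powers

section Periods

variable {l : List α}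

theorem rotate_mul_eq_self {k : ℕ} (h : l.rotate k = l) (q : ℕ) : l.rotate (k * q) = l := by
  induction q with
  | zero => simp
  | succ q ih => rw [Nat.mul_succ, ← List.rotate_rotate, ih, h]

theorem rotate_gcd_eq_self {k m : ℕ} (hk : l.rotate k = l) (hm : l.rotate m = l) :
    l.rotate (k.gcd m) = l := by
  induction k, m using Nat.gcd.induction with
  | H0 m => simpa using hm
  | H1 k m _ ih =>
    rw [Nat.gcd_rec]
    refine ih ?_ hk
    calc l.rotate (m % k) = (l.rotate (k * (m / k))).rotate (m % k) := by
          rw [rotate_mul_eq_self hk]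
      _ = l := by rw [List.rotate_rotate, Nat.div_add_mod, hm]

theorem listPow_take_of_rotate_eq_self {d : ℕ} (hd : d ∣ l.length) (h : l.rotate d = l) :
    listPow (l.take d) (l.length / d) = l := by
  rcases Nat.eq_zero_or_pos l.length with hl | hl
  · simp_all
  have hdl : d ≤ l.length := Nat.le_of_dvd hl hd
  refine List.ext_getElem ?_ fun i h₁ h₂ => ?_
  · simp [Nat.min_eq_left hdl, Nat.div_mul_cancel hd]
  have hd0 : 0 < d := Nat.pos_of_dvd_of_pos hd hl
  have hi : i % d < l.length := (Nat.mod_lt _ hd0).trans_le hdl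
  calc (listPow (l.take d) (l.length / d))[i] = l[i % d] := by
        simp [getElem_listPow, Nat.min_eq_left hdl]
    _ = (l.rotate (d * (i / d)))[i % d]'(by simpa using hi) := by
        simp only [rotate_mul_eq_self h]
    _ = l[i] := by
        simp only [List.getElem_rotate, Nat.mod_add_div, Nat.mod_eq_of_lt h₂]

end Periods

section Primitive

variable {w : List α}

theorem primitive'_iff_forall_rotate_eq_self :
    Primitive' w ↔ w ≠ [] ∧ ∀ k, w.rotate k = w → w.length ∣ k := by
  constructor
  · rintro ⟨hw, hpow⟩
    refine ⟨hw, fun k hk => ?_⟩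
    have hpos : 0 < w.length := List.length_pos_iff.2 hw
    have hgn : k.gcd w.length ∣ w.length := Nat.gcd_dvd_right _ _
    have hg : w.rotate (k.gcd w.length) = w := rotate_gcd_eq_self hk (List.rotate_length w)
    have hq : w.length / k.gcd w.length = 1 := by
      have := Nat.div_pos (Nat.le_of_dvd hpos hgn) (Nat.pos_of_dvd_of_pos hgn hpos)
      by_contra hq
      exact hpow _ _ (by omega) (listPow_take_of_rotate_eq_self hgn hg).symm
    rw [← Nat.eq_of_dvd_of_div_eq_one hgn hq]
    exact Nat.gcd_dvd_left _ _
  · rintro ⟨hw, hrot⟩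
    refine ⟨hw, fun x k hk hwx => ?_⟩
    subst hwx
    have hx : 0 < x.length := List.length_pos_iff.2 (by rintro rfl; simp at hw)
    obtain ⟨j, rfl⟩ : ∃ j, k = j + 1 := ⟨k - 1, by omega⟩
    have hdvd : (listPow x (j + 1)).length ∣ x.length := by
      refine hrot _ ?_
      rw [listPow_succ, List.rotate_append_length_eq, ← listPow_succ', listPow_succ]
    have := Nat.le_of_dvd hx hdvd
    simp only [length_listPow] at this
    nlinarith

theorem Primitive'.dvd_of_rotate_eq_self (hw : Primitive' w) {k : ℕ} (h : w.rotate k = w) :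
    w.length ∣ k :=
  (primitive'_iff_forall_rotate_eq_self.1 hw).2 k h

theorem Primitive'.rotate (hw : Primitive' w) (i : ℕ) : Primitive' (w.rotate i) := by
  refine primitive'_iff_forall_rotate_eq_self.2
    ⟨by simpa [List.rotate_eq_nil_iff] using hw.1, fun k hk => ?_⟩
  rw [List.length_rotate]
  rw [List.rotate_rotate, Nat.add_comm, ← List.rotate_rotate, List.rotate_eq_rotate] at hk
  exact hw.dvd_of_rotate_eq_self hk

theorem Primitive'.injOn_rotate (hw : Primitive' w) :
    Set.InjOn w.rotate (Set.Iio w.length) := by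
  suffices ∀ i j, i ≤ j → j < w.length → w.rotate i = w.rotate j → i = j by
    intro i hi j hj hij
    rcases le_total i j with h | h
    · exact this i j h hj hij
    · exact (this j i h hi hij.symm).symm
  intro i j hij hj h
  have hdvd : w.length ∣ j - i := by
    simpa using (hw.rotate i).dvd_of_rotate_eq_self (k := j - i) (by
      rw [List.rotate_rotate, Nat.add_sub_cancel' hij, h])
  have := Nat.eq_zero_of_dvd_of_lt hdvd (by omega)
  omega

theorem Primitive'.length_dvd_of_listPow_eq {x y : List α} (hx : Primitive' x) {j k : ℕ}
    (hj : j ≠ 0) (h : listPow x j = listPow y k) : x.length ∣ y.length := by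
  refine hx.dvd_of_rotate_eq_self ?_
  have hpow : listPow (x.rotate y.length) j = listPow x j := by
    rw [← rotate_listPow, h, rotate_listPow, List.rotate_length]
  calc x.rotate y.length
      = (listPow (x.rotate y.length) j).take (x.rotate y.length).length :=
        (take_length_listPow _ hj).symm
    _ = x := by rw [hpow, List.length_rotate, take_length_listPow _ hj]

theorem Primitive'.eq_of_listPow_eq {x y : List α} (hx : Primitive' x) (hy : Primitive' y)
    {j k : ℕ} (hj : j ≠ 0) (hk : k ≠ 0) (h : listPow x j = listPow y k) : x = y := by
  have hxy : x.length = y.length :=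
    Nat.dvd_antisymm (hx.length_dvd_of_listPow_eq hj h) (hy.length_dvd_of_listPow_eq hk h.symm)
  rw [← take_length_listPow x hj, ← take_length_listPow y hk, h, hxy]

theorem exists_primitive'_listPow_eq (hw : w ≠ []) :
    ∃ x k, Primitive' x ∧ k ≠ 0 ∧ listPow x k = w := by
  induction hn : w.length using Nat.strong_induction_on generalizing w with
  | _ n ih =>
  by_cases hp : Primitive' w
  · exact ⟨w, 1, hp, one_ne_zero, listPow_one w⟩
  obtain ⟨x, k, hk, rfl⟩ : ∃ x k, 2 ≤ k ∧ w = listPow x k := by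
    simpa [Primitive', hw] using hp
  have hx : x ≠ [] := by rintro rfl; simp at hw
  have hlt : x.length < n := by
    have := List.length_pos_iff.2 hx
    rw [← hn, length_listPow]; nlinarith
  obtain ⟨y, j, hy, hj, rfl⟩ := ih _ hlt hx rfl
  exact ⟨y, j * k, hy, by positivity, (listPow_mul y j k).symm⟩

end Primitive

section Lyndon

variable [LinearOrder α] {w : List α}

theorem lt_append_of_lt_of_not_isPrefix {a b : List α} (h : a < b) (hab : ¬a <+: b)
    (c d : List α) : a ++ c < b ++ d := by
  induction h with
  | nil => exact absurd List.nil_prefix hab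
  | rel h => exact List.Lex.rel h
  | cons _ ih =>
    exact List.Lex.cons (ih fun ⟨t, ht⟩ => hab ⟨t, by rw [List.cons_append, ht]⟩)

theorem lt_of_append_lt_append_left {a b : List α} (c : List α) (h : c ++ a < c ++ b) :
    a < b := by
  rcases lt_trichotomy a b with hab | rfl | hba
  · exact hab
  · exact absurd h (lt_irrefl _)
  · exact absurd h (lt_asymm (List.append_left_lt hba))

theorem IsLyndon.lt_rotate (hw : IsLyndon w) {k : ℕ} (hk0 : 0 < k) (hk : k < w.length) :
    w < w.rotate k := by
  have hlt : w < w.drop k :=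
    hw.2 _ (List.drop_suffix k w) (by rw [Ne, List.drop_eq_nil_iff]; omega) fun h => by
      have := congrArg List.length h
      simp only [List.length_drop] at this
      omega
  rw [List.rotate_eq_drop_append_take hk.le]
  have hnp : ¬w <+: w.drop k := fun hp => by
    have := hp.length_le
    simp only [List.length_drop] at this
    omega
  simpa using lt_append_of_lt_of_not_isPrefix hlt hnp [] (w.take k)

theorem isLyndon_of_forall_lt_rotate (hw : w ≠ [])
    (h : ∀ k, 0 < k → k < w.length → w < w.rotate k) : IsLyndon w := by
  refine ⟨hw, fun v ⟨u, huv⟩ hv hvw => ?_⟩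
  subst huv
  have hu : u ≠ [] := by rintro rfl; simp at hvw
  have hvu : u ++ v < v ++ u := by
    simpa [List.rotate_append_length_eq] using
      h u.length (List.length_pos_iff.2 hu) (by simpa using List.length_pos_iff.2 hv)
  by_contra hnot
  have hvlt : v < u ++ v := lt_of_le_of_ne (not_lt.1 hnot) hvw
  by_cases hpre : v <+: u ++ v
  · obtain ⟨t, ht⟩ := hpre
    have htu : t < u := lt_of_append_lt_append_left v (by rwa [ht])
    have hlen : t.length = u.length := by simpa [Nat.add_comm] using congrArg List.length ht
    have htv : u ++ v < t ++ v := by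
      simpa [← ht, List.rotate_append_length_eq] using
        h v.length (List.length_pos_iff.2 hv) (by simpa using List.length_pos_iff.2 hu)
    have hnp : ¬t <+: u := fun hp => lt_irrefl u (hp.eq_of_length hlen ▸ htu)
    exact lt_asymm htv (lt_append_of_lt_of_not_isPrefix htu hnp v v)
  · exact lt_asymm hvu (by simpa using lt_append_of_lt_of_not_isPrefix hvlt hpre u [])

theorem IsLyndon.primitive' (hw : IsLyndon w) : Primitive' w := by
  refine primitive'_iff_forall_rotate_eq_self.2 ⟨hw.1, fun k hk => Nat.dvd_of_mod_eq_zero ?_⟩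
  by_contra hk0
  have hlt := hw.lt_rotate (Nat.pos_of_ne_zero hk0) (Nat.mod_lt _ (List.length_pos_iff.2 hw.1))
  rw [List.rotate_mod, hk] at hlt
  exact lt_irrefl _ hlt

theorem IsLyndon.eq_of_rotate_eq {L L' : List α} (hL : IsLyndon L) (hL' : IsLyndon L') {k : ℕ}
    (h : L.rotate k = L') : L = L' := by
  have hn : 0 < L.length := List.length_pos_iff.2 hL.1
  rw [← List.rotate_mod] at h
  rcases Nat.eq_zero_or_pos (k % L.length) with hk | hk
  · rwa [hk, List.rotate_zero] at h
  have hk' := Nat.mod_lt k hn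
  have h₁ : L < L' := h ▸ hL.lt_rotate hk hk'
  have h₂ : L' < L := by
    have hback : L'.rotate (L.length - k % L.length) = L := by
      rw [← h, List.rotate_rotate, Nat.add_sub_cancel' hk'.le, List.rotate_length]
    rw [← hback]
    exact hL'.lt_rotate (by omega) (by rw [← h, List.length_rotate]; omega)
  exact absurd h₁ (lt_asymm h₂)

theorem Primitive'.exists_isLyndon_rotate_eq (hw : Primitive' w) :
    ∃ L k, IsLyndon L ∧ L.rotate k = w := by
  have hn : 0 < w.length := List.length_pos_iff.2 hw.1
  set S := (Finset.range w.length).image w.rotate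
  have hS : S.Nonempty := ⟨_, Finset.mem_image_of_mem _ (Finset.mem_range.2 hn)⟩
  obtain ⟨i, hi, hri⟩ := Finset.mem_image.1 (S.min'_mem hS)
  rw [Finset.mem_range] at hi
  have hr : Primitive' (S.min' hS) := hri ▸ hw.rotate i
  refine ⟨S.min' hS, w.length - i, isLyndon_of_forall_lt_rotate hr.1 fun k hk0 hk => ?_, ?_⟩
  · have hmem : (S.min' hS).rotate k ∈ S := by
      rw [← hri, List.rotate_rotate, ← List.rotate_mod]
      exact Finset.mem_image_of_mem _ (Finset.mem_range.2 (Nat.mod_lt _ hn))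
    refine lt_of_le_of_ne (S.min'_le _ hmem) fun heq => ?_
    have := Nat.le_of_dvd hk0 (hr.dvd_of_rotate_eq_self heq.symm)
    omega
  · rw [← hri, List.rotate_rotate, Nat.add_sub_cancel' hi.le, List.rotate_length]

end Lyndon

section Counting

variable (α) in
def words [Fintype α] (m : ℕ) : Finset (List α) :=
  (univ : Finset (Fin m → α)).map ⟨List.ofFn, List.ofFn_injective⟩

variable [Fintype α]

@[simp] theorem mem_words {m : ℕ} {l : List α} : l ∈ words α m ↔ l.length = m := by
  simp only [words, mem_map, mem_univ, true_and, Function.Embedding.coeFn_mk]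
  constructor
  · rintro ⟨v, rfl⟩
    simp
  · rintro rfl
    exact ⟨fun i => l[i], List.ofFn_getElem⟩

theorem card_words (m : ℕ) : #(words α m) = Fintype.card α ^ m := by
  simp [words]

theorem card_filter_ofFn (P : List α → Prop) (m : ℕ) :
    #{v : Fin m → α | P (List.ofFn v)} = #{l ∈ words α m | P l} := by
  rw [words, filter_map, card_map]
  rfl

theorem card_filter_words_infix (P : List α → Prop) {i m n : ℕ} (h : i + m ≤ n) :
    #{l ∈ words α n | P ((l.drop i).take m)} =
      #{l ∈ words α m | P l} * Fintype.card α ^ (n - m) := by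
  obtain ⟨k, rfl⟩ := Nat.exists_eq_add_of_le h
  rw [show i + m + k - m = i + k by omega, pow_add, ← card_words, ← card_words,
    ← card_product, ← card_product]
  refine card_nbij' (fun l => ((l.drop i).take m, l.take i, l.drop (i + m)))
    (fun t => t.2.1 ++ t.1 ++ t.2.2) ?_ ?_ ?_ ?_
  · intro l hl
    simp only [mem_coe, mem_product, mem_filter, mem_words] at hl ⊢
    obtain ⟨hl, hP⟩ := hl
    simp only [List.length_take, List.length_drop, hl, hP, and_true]
    omega
  · rintro ⟨b, a, c⟩ h
    simp only [mem_coe, mem_product, mem_filter, mem_words] at h ⊢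
    obtain ⟨⟨rfl, hP⟩, rfl, rfl⟩ := h
    simp [hP, Nat.add_assoc]
  · intro l _
    simp
  · rintro ⟨b, a, c⟩ h
    simp only [mem_coe, mem_product, mem_filter, mem_words] at h
    obtain ⟨⟨rfl, -⟩, rfl, -⟩ := h
    simp

theorem sum_card_factors (P : List α → Prop) (n : ℕ) :
    ∑ w : Fin n → α, #{p ∈ range n ×ˢ Icc 1 n |
        p.1 + p.2 ≤ n ∧ P (((List.ofFn w).drop p.1).take p.2)} =
      ∑ m ∈ Icc 1 n, (n - m + 1) * (#{l ∈ words α m | P l} * Fintype.card α ^ (n - m)) := by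
  refine (sum_card_bipartiteAbove_eq_sum_card_bipartiteBelow _).trans ?_
  rw [sum_product_right]
  refine sum_congr rfl fun m hm => ?_
  rw [mem_Icc] at hm
  have hstarts : {i ∈ range n | i + m ≤ n} = range (n - m + 1) := by
    ext i
    simp only [mem_filter, mem_range]
    omega
  calc _ = ∑ i ∈ range n with i + m ≤ n,
        #{l ∈ words α m | P l} * Fintype.card α ^ (n - m) := by
        rw [sum_filter]
        refine sum_congr rfl fun i _ => ?_
        split_ifs with h
        · simpa [bipartiteBelow, h, card_filter_ofFn (fun l => P ((l.drop i).take m))] using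
            card_filter_words_infix P h
        · simp [bipartiteBelow, h]
    _ = _ := by rw [hstarts, sum_const, card_range, smul_eq_mul]

theorem sum_card_primitive' {m : ℕ} (hm : 0 < m) :
    ∑ d ∈ m.divisors, #{l ∈ words α d | Primitive' l} = Fintype.card α ^ m := by
  have hdiv : ∀ d, d ∣ m → m / d ≠ 0 := fun d hd =>
    (Nat.div_pos (Nat.le_of_dvd hm hd) (Nat.pos_of_dvd_of_pos hd hm)).ne'
  rw [← card_sigma, ← card_words]
  refine card_nbij (fun p => listPow p.2 (m / p.1)) ?_ ?_ ?_
  · rintro ⟨d, x⟩ h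
    simp only [mem_coe, mem_sigma, mem_filter, mem_words, Nat.mem_divisors] at h ⊢
    obtain ⟨⟨hd, -⟩, rfl, -⟩ := h
    simp [Nat.div_mul_cancel hd]
  · rintro ⟨d, x⟩ hx ⟨e, y⟩ hy (h : listPow x (m / d) = listPow y (m / e))
    simp only [mem_coe, mem_sigma, mem_filter, mem_words, Nat.mem_divisors] at hx hy
    obtain ⟨⟨hd, -⟩, rfl, hx⟩ := hx
    obtain ⟨⟨he, -⟩, rfl, hy⟩ := hy
    obtain rfl := hx.eq_of_listPow_eq hy (hdiv _ hd) (hdiv _ he) h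
    rfl
  · intro w hw
    simp only [mem_coe, mem_words] at hw
    obtain ⟨x, k, hx, hk, rfl⟩ :=
      exists_primitive'_listPow_eq (List.ne_nil_of_length_pos (hw ▸ hm))
    refine ⟨⟨x.length, x⟩, ?_, ?_⟩
    · simp only [mem_coe, mem_sigma, mem_filter, mem_words, Nat.mem_divisors]
      exact ⟨⟨⟨k, by rw [← hw, length_listPow, Nat.mul_comm]⟩, hm.ne'⟩, trivial, hx⟩
    · simp [← hw, Nat.mul_div_cancel _ (List.length_pos_iff.2 hx.1)]

variable [LinearOrder α]

theorem card_primitive'_eq_mul_card_isLyndon (m : ℕ) :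
    #{l ∈ words α m | Primitive' l} = m * #{l ∈ words α m | IsLyndon l} := by
  have hprod : m * #{l ∈ words α m | IsLyndon l} =
      #(range m ×ˢ {l ∈ words α m | IsLyndon l}) := by
    rw [card_product, card_range]
  rw [hprod]
  refine (card_nbij (fun p => p.2.rotate p.1) ?_ ?_ ?_).symm
  · rintro ⟨i, L⟩ h
    simp only [mem_coe, mem_product, mem_range, mem_filter, mem_words] at h ⊢
    exact ⟨by simp [h.2.1], h.2.2.primitive'.rotate i⟩
  · rintro ⟨i₁, L₁⟩ h₁ ⟨i₂, L₂⟩ h₂ (h : L₁.rotate i₁ = L₂.rotate i₂)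
    simp only [mem_coe, mem_product, mem_range, mem_filter, mem_words] at h₁ h₂
    obtain ⟨hi₁, rfl, hL₁⟩ := h₁
    obtain ⟨hi₂, hlen, hL₂⟩ := h₂
    obtain rfl : L₁ = L₂ := hL₁.eq_of_rotate_eq hL₂ (k := i₁ + (L₁.length - i₂)) (by
      rw [← List.rotate_rotate, h, List.rotate_rotate, Nat.add_sub_cancel' hi₂.le, ← hlen,
        List.rotate_length])
    exact Prod.ext (hL₁.primitive'.injOn_rotate hi₁ hi₂ h) rfl
  · intro w hw
    simp only [mem_coe, mem_filter, mem_words] at hw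
    obtain ⟨rfl, hw⟩ := hw
    obtain ⟨L, k, hL, rfl⟩ := hw.exists_isLyndon_rotate_eq
    refine ⟨(k % L.length, L), ?_, List.rotate_mod L k⟩
    simp only [mem_coe, mem_product, mem_range, mem_filter, mem_words, List.length_rotate]
    exact ⟨Nat.mod_lt _ (List.length_pos_iff.2 hL.1), trivial, hL⟩

theorem mul_card_isLyndon_eq_sum_moebius {m : ℕ} (hm : 0 < m) :
    (m : ℤ) * #{l ∈ words α m | IsLyndon l} =
      ∑ d ∈ m.divisors, (ArithmeticFunction.moebius (m / d) : ℤ) * Fintype.card α ^ d := by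
  have hinv := (ArithmeticFunction.sum_eq_iff_sum_mul_moebius_eq
    (f := fun d => (#{l ∈ words α d | Primitive' l} : ℤ))
    (g := fun n => (Fintype.card α : ℤ) ^ n)).1
    (fun n hn => by exact_mod_cast sum_card_primitive' hn) m hm
  rw [← Nat.sum_divisorsAntidiagonal'
    (fun a b => ArithmeticFunction.moebius a * (Fintype.card α : ℤ) ^ b)]
  simpa [card_primitive'_eq_mul_card_isLyndon] using hinv.symm

end Counting

theorem expected_total_lyndon_factors_general (σ n : ℕ) :
    (∑ w : Fin n → Fin σ,
        ((((Finset.range n) ×ˢ (Finset.Icc 1 n)).filter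
          (fun p : ℕ × ℕ => p.1 + p.2 ≤ n ∧
            IsLyndon (((List.ofFn w).drop p.1).take p.2))).card : ℚ)) =
      ∑ m ∈ Finset.Icc 1 n, (((n : ℚ) - (m : ℚ) + 1) / (m : ℚ)) * (σ : ℚ) ^ (n - m) *
        ∑ d ∈ m.divisors, ((ArithmeticFunction.moebius (m / d) : ℤ) : ℚ) * (σ : ℚ) ^ d := by
  have hfactors := sum_card_factors (α := Fin σ) IsLyndon n
  rw [Fintype.card_fin] at hfactors
  rw [← Nat.cast_sum, hfactors, Nat.cast_sum]
  refine Finset.sum_congr rfl fun m hm => ?_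
  obtain ⟨hm1, hmn⟩ := Finset.mem_Icc.1 hm
  have hlyndon :=
    congrArg (Int.cast : ℤ → ℚ) (mul_card_isLyndon_eq_sum_moebius (α := Fin σ) hm1)
  push_cast [Nat.cast_sub hmn, Fintype.card_fin] at hlyndon ⊢
  rw [← hlyndon]
  field_simp

theorem expected_total_lyndon_factors (σ n : ℕ) (hσ : 1 ≤ σ) :
    (∑ w : Fin n → Fin σ,
        ((((Finset.range n) ×ˢ (Finset.Icc 1 n)).filter
          (fun p : ℕ × ℕ => p.1 + p.2 ≤ n ∧
            IsLyndon (((List.ofFn w).drop p.1).take p.2))).card : ℚ)) =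
      ∑ m ∈ Finset.Icc 1 n, (((n : ℚ) - (m : ℚ) + 1) / (m : ℚ)) * (σ : ℚ) ^ (n - m) *
        ∑ d ∈ m.divisors, ((ArithmeticFunction.moebius (m / d) : ℤ) : ℚ) * (σ : ℚ) ^ d :=
  expected_total_lyndon_factors_general σ n
end

section
/- Let L be a borderless word of length m ≤ n over an alphabet Σ of size σ. The number of words in Σ^n containing at least one occurrence of L equals Σ_{s=1}^{⌊n/m⌋} (−1)^{s+1}·C(n − sm + s, s)·σ^{n − sm}. -/
open scoped Classical

open Finset

/-!
Let `A k` be the set of words with an occurrence of `L` at position `k`, for `k + m ≤ n`. By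
inclusion–exclusion the count is `∑ (-1) ^ (#T + 1) * #(⋂ k ∈ T, A k)` over nonempty sets `T`
of positions. As `L` is borderless, two of its occurrences cannot overlap, so the intersection
is empty unless the positions of `T` are pairwise at distance at least `m`; then the windows
`[k, k + m)` are disjoint, `L` fixes exactly `#T * m` letters and the intersection has
`σ ^ (n - #T * m)` elements. Finally, there are `C(n - s * m + s, s)` such sets with `s`
elements, by Pascal's rule applied to the largest position.
-/

def Sparse (m : ℕ) (T : Finset ℕ) : Prop := ∀ i ∈ T, ∀ j ∈ T, i < j → i + m ≤ j

namespace List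
variable {α : Type*}

theorem isInfix_iff_exists_prefix_drop {l₁ l₂ : List α} :
    l₁ <:+: l₂ ↔ ∃ k, k + l₁.length ≤ l₂.length ∧ l₁ <+: l₂.drop k := by
  simp only [infix_iff_getElem?, prefix_iff_getElem?, getElem?_drop, Nat.add_comm _ l₁.length]
  grind

end List

theorem Borderless.add_length_le_of_prefix_drop {α : Type*} {L u : List α} (hb : Borderless L)
    {k k' : ℕ} (hk : L <+: u.drop k) (hk' : L <+: u.drop k') (hlt : k < k') :
    k + L.length ≤ k' := by
  -- otherwise the overlap `L.drop (k' - k)` is a border of `L`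
  by_contra! hover
  have hpre : L.drop (k' - k) <+: u.drop k' := by
    simpa [List.drop_drop, Nat.add_sub_cancel' hlt.le] using hk.drop (k' - k)
  refine hb (L.drop (k' - k)) ?_ (by simp; omega)
    ⟨List.prefix_of_prefix_length_le hpre hk' (by simp), List.drop_suffix _ _⟩
  simp; omega

theorem Borderless.sparse_of_forall_prefix_drop {α : Type*} {L u : List α} (hb : Borderless L)
    {T : Finset ℕ} (h : ∀ k ∈ T, L <+: u.drop k) : Sparse L.length T :=
  fun _ hi _ hj hlt => hb.add_length_le_of_prefix_drop (h _ hi) (h _ hj) hlt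

theorem biUnion_Ico_subset_range {m n : ℕ} {T : Finset ℕ} (hT : T ⊆ range (n + 1 - m)) :
    T.biUnion (fun k => Ico k (k + m)) ⊆ range n := fun j hj => by
  obtain ⟨k, hk, hj⟩ := mem_biUnion.1 hj
  have := mem_range.1 (hT hk)
  rw [mem_Ico] at hj
  exact mem_range.2 (by omega)

namespace Sparse
variable {m : ℕ} {T : Finset ℕ}

theorem eq_of_mem_Ico (hT : Sparse m T) {k k' j : ℕ} (hk : k ∈ T) (hk' : k' ∈ T)
    (hj : j ∈ Ico k (k + m)) (hj' : j ∈ Ico k' (k' + m)) : k = k' := by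
  rw [mem_Ico] at hj hj'
  rcases lt_trichotomy k k' with hlt | heq | hlt
  · have := hT _ hk _ hk' hlt; omega
  · exact heq
  · have := hT _ hk' _ hk hlt; omega

theorem card_biUnion_Ico (hT : Sparse m T) : #(T.biUnion fun k => Ico k (k + m)) = #T * m := by
  rw [card_biUnion fun k hk k' hk' hne => disjoint_left.2 fun j hj hj' => hne
    (hT.eq_of_mem_Ico hk hk' hj hj')]
  simp

theorem card_mul_le {n : ℕ} (hT : Sparse m T) (hTn : T ⊆ range (n + 1 - m)) : #T * m ≤ n := by
  calc #T * m = #(T.biUnion fun k => Ico k (k + m)) := hT.card_biUnion_Ico.symm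
    _ ≤ #(range n) := card_le_card (biUnion_Ico_subset_range hTn)
    _ = n := card_range n

end Sparse

theorem sparse_insert_iff {m N : ℕ} {T : Finset ℕ} (hT : T ⊆ range N) :
    Sparse m (insert N T) ↔ Sparse m T ∧ T ⊆ range (N + 1 - m) := by
  have hlt : ∀ i ∈ T, i < N := fun i hi => mem_range.1 (hT hi)
  constructor
  · intro h
    refine ⟨fun i hi j hj => h i (mem_insert_of_mem hi) j (mem_insert_of_mem hj),
      fun i hi => mem_range.2 ?_⟩
    have := h i (mem_insert_of_mem hi) N (mem_insert_self N T) (hlt i hi)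
    omega
  · rintro ⟨h, hN⟩ i hi j hj hij
    rw [mem_insert] at hi hj
    rcases hi with rfl | hi <;> rcases hj with rfl | hj
    · omega
    · have := hlt j hj; omega
    · have := mem_range.1 (hN hi); omega
    · exact h i hi j hj hij

theorem card_sparse_powersetCard_succ {m : ℕ} (hm : 0 < m) (N s : ℕ) :
    #{T ∈ powersetCard (s + 1) (range (N + 1)) | Sparse m T} =
      #{T ∈ powersetCard (s + 1) (range N) | Sparse m T} +
        #{T ∈ powersetCard s (range (N + 1 - m)) | Sparse m T} := by
  rw [range_add_one, powersetCard_succ_insert notMem_range_self, filter_union,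
    card_union_of_disjoint, filter_image, card_image_of_injOn]
  · congr 2
    ext T
    simp only [mem_filter, mem_powersetCard]
    constructor
    · rintro ⟨⟨hT, hc⟩, h⟩
      exact ⟨⟨((sparse_insert_iff hT).1 h).2, hc⟩, ((sparse_insert_iff hT).1 h).1⟩
    · rintro ⟨⟨hT, hc⟩, h⟩
      have hTN : T ⊆ range N := hT.trans (range_mono (by omega))
      exact ⟨⟨hTN, hc⟩, (sparse_insert_iff hTN).2 ⟨h, hT⟩⟩
  · intro T hT T' hT' h
    simp only [mem_coe, mem_filter, mem_powersetCard] at hT hT'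
    rw [← erase_insert (fun hN => notMem_range_self (hT.1.1 hN)), h,
      erase_insert (fun hN => notMem_range_self (hT'.1.1 hN))]
  · refine disjoint_left.2 fun T hT hT' => ?_
    simp only [mem_filter, mem_image, mem_powersetCard] at hT hT'
    obtain ⟨⟨T', -, rfl⟩, -⟩ := hT'
    exact notMem_range_self (hT.1.1 (mem_insert_self N T'))

/-- For `s ≥ 1` the right-hand side is `C(N - (s - 1) * d, s)`; truncated subtraction makes it
`0` exactly when there is no such set. -/
theorem card_sparse_powersetCard (d N s : ℕ) :
    #{T ∈ powersetCard s (range N) | Sparse (d + 1) T} = (N + d - s * d).choose s := by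
  induction N using Nat.strong_induction_on generalizing s with
  | _ N ih =>
  rcases s with _ | s
  · simp [Sparse, filter_singleton]
  rcases N with _ | N
  · simp [Nat.sub_eq_zero_of_le (Nat.le_mul_of_pos_left d s.succ_pos)]
  rw [card_sparse_powersetCard_succ d.succ_pos, Nat.add_sub_add_right, ih N (by omega),
    ih (N - d) (by omega)]
  rcases s with _ | s
  · simp
  have hd : d ≤ (s + 1) * d := Nat.le_mul_of_pos_left d s.succ_pos
  rw [add_mul _ 1 d, one_mul]
  generalize (s + 1) * d = x at hd ⊢
  rw [show N + 1 + d - (x + d) = N + 1 - x by omega, show N + d - (x + d) = N - x by omega,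
    show N - d + d - x = N - x by omega]
  rcases le_or_gt x N with h | h
  · rw [show N + 1 - x = N - x + 1 by omega, Nat.choose_succ_succ, add_comm]
  · simp [Nat.sub_eq_zero_of_le, h.le, Nat.succ_le_of_lt h]

theorem sum_sparse_eq_sum_choose {M : Type*} [AddCommMonoid M] {n m : ℕ} (hm : 0 < m)
    (f : ℕ → M) :
    ∑ T ∈ (range (n + 1 - m)).powerset with T.Nonempty ∧ Sparse m T, f #T =
      ∑ s ∈ Icc 1 (n / m), (n - s * m + s).choose s • f s := by
  rw [← sum_fiberwise_of_maps_to (g := card) (t := Icc 1 (n / m)) fun T hT => by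
    simp only [mem_filter, mem_powerset] at hT
    exact mem_Icc.2 ⟨card_pos.2 hT.2.1, (Nat.le_div_iff_mul_le hm).2 (hT.2.2.card_mul_le hT.1)⟩]
  refine sum_congr rfl fun s hs => ?_
  rw [sum_congr rfl fun T hT => congrArg f (mem_filter.1 hT).2, sum_const]
  obtain ⟨d, rfl⟩ : ∃ d, m = d + 1 := ⟨m - 1, by omega⟩
  have hsn : s * (d + 1) ≤ n := (Nat.le_div_iff_mul_le hm).1 (mem_Icc.1 hs).2
  have hcard := card_sparse_powersetCard d (n + 1 - (d + 1)) s
  have hds : d ≤ s * d := Nat.le_mul_of_pos_left d (mem_Icc.1 hs).1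
  rw [mul_add_one] at hsn
  rw [show n + 1 - (d + 1) + d - s * d = n - s * (d + 1) + s by
    rw [mul_add_one]; generalize s * d = x at hsn hds ⊢; omega] at hcard
  rw [← hcard, filter_filter]
  congr 2
  ext T
  simp only [mem_filter, mem_powerset, mem_powersetCard]
  constructor
  · tauto
  · rintro ⟨⟨hT, rfl⟩, hsp⟩
    exact ⟨hT, ⟨card_pos.1 (mem_Icc.1 hs).1, hsp⟩, rfl⟩

theorem Finset.prod_range_ite_mem_one {M : Type*} [CommMonoid M] {C : Finset ℕ} {n : ℕ}
    (hC : C ⊆ range n) (a : M) : ∏ j ∈ range n, (if j ∈ C then 1 else a) = a ^ (n - #C) := by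
  rw [prod_ite, prod_const_one, one_mul, prod_const, filter_not, filter_mem_eq_inter,
    inter_eq_right.2 hC, card_sdiff_of_subset hC, card_range]

section Words
variable {α : Type*} [Fintype α] [DecidableEq α] {n : ℕ}

def compatibleLetters (L : List α) (T : Finset ℕ) (j : ℕ) : Finset α :=
  {c | ∀ k ∈ T, ∀ i (hi : i < L.length), k + i = j → c = L[i]}

theorem filter_forall_prefix_drop_ofFn_eq_piFinset (L : List α) {T : Finset ℕ}
    (hT : T ⊆ range (n + 1 - L.length)) :
    ({w : Fin n → α | ∀ k ∈ T, L <+: (List.ofFn w).drop k} : Finset _) =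
      Fintype.piFinset fun j : Fin n => compatibleLetters L T j := by
  ext w
  simp only [mem_filter, mem_univ, true_and, Fintype.mem_piFinset, compatibleLetters,
    List.prefix_iff_getElem?, List.getElem?_drop, List.getElem?_ofFn]
  constructor
  · rintro h ⟨j, hj⟩ k hk i hi rfl
    simpa [hj] using h k hk i hi
  · intro h k hk i hi
    have hki : k + i < n := by have := mem_range.1 (hT hk); omega
    simpa [dif_pos hki] using h ⟨k + i, hki⟩ k hk i hi rfl

theorem Sparse.card_compatibleLetters {L : List α} {T : Finset ℕ} (hT : Sparse L.length T)
    (j : ℕ) : #(compatibleLetters L T j) =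
      if j ∈ T.biUnion (fun k => Ico k (k + L.length)) then 1 else Fintype.card α := by
  split_ifs with hj
  · obtain ⟨k, hk, hjk⟩ := mem_biUnion.1 hj
    have hjk' := mem_Ico.1 hjk
    refine card_eq_one.2 ⟨L[j - k], ext fun c => ?_⟩
    simp only [compatibleLetters, mem_filter, mem_univ, true_and, mem_singleton]
    refine ⟨fun hc => hc k hk (j - k) (by omega) (by omega), ?_⟩
    rintro rfl k' hk' i hi rfl
    obtain rfl := hT.eq_of_mem_Ico hk hk' hjk (mem_Ico.2 ⟨by omega, by omega⟩)
    simp only [Nat.add_sub_cancel_left]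
  · rw [← card_univ]
    congr 1
    refine eq_univ_of_forall fun c => mem_filter.2 ⟨mem_univ c, fun k hk i hi hki => ?_⟩
    exact (hj (mem_biUnion.2 ⟨k, hk, mem_Ico.2 ⟨by omega, by omega⟩⟩)).elim

theorem Sparse.card_filter_forall_prefix_drop_ofFn {L : List α} {T : Finset ℕ}
    (hT : Sparse L.length T) (hTn : T ⊆ range (n + 1 - L.length)) :
    #{w : Fin n → α | ∀ k ∈ T, L <+: (List.ofFn w).drop k} =
      Fintype.card α ^ (n - #T * L.length) := by
  rw [filter_forall_prefix_drop_ofFn_eq_piFinset L hTn, Fintype.card_piFinset,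
    Fin.prod_univ_eq_prod_range (fun j => #(compatibleLetters L T j)) n]
  simp_rw [hT.card_compatibleLetters]
  rw [prod_range_ite_mem_one (biUnion_Ico_subset_range hTn), hT.card_biUnion_Ico]

theorem Borderless.card_filter_isInfix_ofFn {L : List α} (hb : Borderless L) :
    (#{w : Fin n → α | L <:+: List.ofFn w} : ℤ) =
      ∑ T ∈ (range (n + 1 - L.length)).powerset with T.Nonempty ∧ Sparse L.length T,
        (-1) ^ (#T + 1) * (Fintype.card α : ℤ) ^ (n - #T * L.length) := by
  set S : ℕ → Finset (Fin n → α) := fun k => {w | L <+: (List.ofFn w).drop k}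
  have hunion : ({w : Fin n → α | L <:+: List.ofFn w} : Finset _) =
      (range (n + 1 - L.length)).biUnion S := by
    ext w
    simp only [S, mem_filter, mem_univ, true_and, mem_biUnion, mem_range,
      List.isInfix_iff_exists_prefix_drop, List.length_ofFn]
    exact exists_congr fun k => and_congr_left fun _ => by omega
  have hinter (T : Finset ℕ) (hT : T ⊆ range (n + 1 - L.length)) :
      (#(T.inf S) : ℤ) =
        if Sparse L.length T then (Fintype.card α : ℤ) ^ (n - #T * L.length) else 0 := by
    have hinf : T.inf S = ({w | ∀ k ∈ T, L <+: (List.ofFn w).drop k} : Finset _) := by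
      ext w
      simp [S, mem_inf]
    split_ifs with hsp
    · rw [hinf, hsp.card_filter_forall_prefix_drop_ofFn hT, Nat.cast_pow]
    · rw [hinf, filter_false_of_mem fun w _ hw => hsp (hb.sparse_of_forall_prefix_drop hw)]
      simp
  rw [hunion, inclusion_exclusion_card_biUnion]
  simp_rw [inf'_eq_inf]
  rw [sum_coe_sort _ fun T => (-1) ^ (#T + 1) * (#(T.inf S) : ℤ), ← filter_filter,
    sum_filter (Sparse L.length)]
  refine sum_congr rfl fun T hT => ?_
  rw [hinter T (mem_powerset.1 (mem_filter.1 hT).1), mul_ite, mul_zero]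

end Words

theorem count_words_containing_borderless_general (σ n m : ℕ) (hm : 1 ≤ m)
    (L : List (Fin σ)) (hL : L.length = m) (hb : Borderless L) :
    ((((Finset.univ : Finset (Fin n → Fin σ))).filter
        (fun w => L <:+: List.ofFn w)).card : ℤ) =
      ∑ s ∈ Finset.Icc 1 (n / m), (-1 : ℤ) ^ (s + 1) *
        ((n - s * m + s).choose s : ℤ) * (σ : ℤ) ^ (n - s * m) := by
  subst hL
  rw [hb.card_filter_isInfix_ofFn, Fintype.card_fin,
    sum_sparse_eq_sum_choose hm fun s => (-1 : ℤ) ^ (s + 1) * (σ : ℤ) ^ (n - s * L.length)]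
  refine sum_congr rfl fun s _ => ?_
  rw [nsmul_eq_mul]
  ring

theorem count_words_containing_borderless (σ n m : ℕ) (hσ : 1 ≤ σ) (hm : 1 ≤ m)
    (hmn : m ≤ n) (L : List (Fin σ)) (hL : L.length = m) (hb : Borderless L) :
    ((((Finset.univ : Finset (Fin n → Fin σ))).filter
        (fun w => L <:+: List.ofFn w)).card : ℤ) =
      ∑ s ∈ Finset.Icc 1 (n / m), (-1 : ℤ) ^ (s + 1) *
        ((n - s * m + s).choose s : ℤ) * (σ : ℤ) ^ (n - s * m) :=
  count_words_containing_borderless_general σ n m hm L hL hb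
end

section
/- For all n ≥ 1, the n-th standard word s_n associated with a directive sequence (d_1, d_2, d_3, ...) with d_1 ≥ 0 and d_i ≥ 1 for i ≥ 2, defined by s_{−1} = b, s_0 = a, s_n = s_{n−1}^{d_n} s_{n−2}, is a primitive word. -/
/-!
The numbers of `a`s and of `b`s in the standard words satisfy the same continuant recurrence
`x_{n+1} = d_n x_n + x_{n-1}`, so the determinant `|a_{n+1} a_n; b_{n+1} b_n|` only changes sign
from one step to the next and equals `±1`. Hence the two letter counts of `s_n` are coprime,
whereas in a power `x^k` both are divisible by `k`.
-/

open scoped Classical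

theorem listPow_count {α : Type*} [DecidableEq α] (x : List α) (k : ℕ) (c : α) :
    (listPow x k).count c = k * x.count c := by
  simp [listPow, List.count_flatten]

theorem Primitive'.of_coprime_count {α : Type*} [DecidableEq α] {w : List α} (a b : α)
    (h : Nat.Coprime (w.count a) (w.count b)) : Primitive' w := by
  refine ⟨?_, fun x k hk hw => ?_⟩
  · rintro rfl
    simp at h
  · subst hw
    rw [listPow_count, listPow_count] at h
    have : k = 1 := Nat.eq_one_of_dvd_coprimes h (Dvd.intro _ rfl) (Dvd.intro _ rfl)
    omega

section Continuant

variable {R : Type*} [CommRing R] (d x y : ℕ → R)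

theorem det_eq_neg_one_pow_of_continuant
    (hx : ∀ k, x (k + 2) = d (k + 1) * x (k + 1) + x k)
    (hy : ∀ k, y (k + 2) = d (k + 1) * y (k + 1) + y k)
    (h0 : x 1 * y 0 - x 0 * y 1 = 1) (n : ℕ) :
    x (n + 1) * y n - x n * y (n + 1) = (-1) ^ n := by
  induction n with
  | zero => simpa using h0
  | succ n ih =>
    rw [hx, hy, pow_succ, ← ih]
    ring

theorem isCoprime_of_continuant
    (hx : ∀ k, x (k + 2) = d (k + 1) * x (k + 1) + x k)
    (hy : ∀ k, y (k + 2) = d (k + 1) * y (k + 1) + y k)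
    (h0 : x 1 * y 0 - x 0 * y 1 = 1) (n : ℕ) :
    IsCoprime (x (n + 1)) (y (n + 1)) := by
  refine ⟨(-1) ^ n * y n, -((-1) ^ n * x n), ?_⟩
  calc (-1) ^ n * y n * x (n + 1) + -((-1) ^ n * x n) * y (n + 1)
      = (-1) ^ n * (x (n + 1) * y n - x n * y (n + 1)) := by ring
    _ = 1 := by
      rw [det_eq_neg_one_pow_of_continuant d x y hx hy h0, ← mul_pow]
      simp

end Continuant

theorem standard_words_primitive_general (d : ℕ → ℕ)
    (t : ℕ → List (Fin 2)) (h0 : t 0 = [1]) (h1 : t 1 = [0])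
    (hrec : ∀ k, 1 ≤ k → t (k + 1) = listPow (t k) (d k) ++ t (k - 1)) :
    ∀ n, 1 ≤ n → Primitive' (t (n + 1)) := by
  have hcount : ∀ (c : Fin 2) (k : ℕ),
      ((t (k + 2)).count c : ℤ) = d (k + 1) * (t (k + 1)).count c + (t k).count c := by
    intro c k
    rw [hrec (k + 1) (by omega), Nat.add_sub_cancel, List.count_append, listPow_count]
    push_cast
    ring
  intro n _
  refine Primitive'.of_coprime_count 0 1 (Nat.isCoprime_iff_coprime.mp ?_)
  exact isCoprime_of_continuant (fun k => (d k : ℤ)) (fun k => ((t k).count 0 : ℤ))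
    (fun k => ((t k).count 1 : ℤ)) (hcount 0) (hcount 1) (by simp [h0, h1]) n

theorem standard_words_primitive (d : ℕ → ℕ) (hd : ∀ i, 2 ≤ i → 1 ≤ d i)
    (t : ℕ → List (Fin 2)) (h0 : t 0 = [1]) (h1 : t 1 = [0])
    (hrec : ∀ k, 1 ≤ k → t (k + 1) = listPow (t k) (d k) ++ t (k - 1)) :
    ∀ n, 1 ≤ n → Primitive' (t (n + 1)) :=
  standard_words_primitive_general d t h0 h1 hrec
end

section
/- For all n ≥ 1, the n-th finite Fibonacci word f_n, defined by f_{−1} = b, f_0 = a, f_n = f_{n−1} f_{n−2}, can be written as f_n = p_n · x · y where p_n is a palindrome and xy = ab if n is odd, xy = ba if n is even. -/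
open scoped Classical

/-
Consecutive Fibonacci words almost commute: `f_n f_{n-1}` and `f_{n-1} f_n` agree except for their
last two letters, which are `ab` in one and `ba` in the other, and their common prefix `q` is a
palindrome, as is `f_n q`. These facts reproduce themselves when `(f_n, f_{n-1})` is replaced by
`(f_n f_{n-1}, f_n)` and `q` by `f_n q`, and `f_{n+1} = f_n f_{n-1} = q · xy` is the claim.
Below, `t k` is `f_{k-1}`.
-/

variable {α : Type*}

def AlmostCommuting (u v q w : List α) : Prop :=
  q.reverse = q ∧ u ++ v = q ++ w ∧ v ++ u = q ++ w.reverse ∧ (u ++ q).reverse = u ++ q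

theorem AlmostCommuting.append_left {u v q w : List α} (h : AlmostCommuting u v q w) :
    AlmostCommuting (u ++ v) u (u ++ q) w.reverse := by
  obtain ⟨hq, huv, hvu, huq⟩ := h
  refine ⟨huq, ?_, ?_, ?_⟩
  · rw [List.append_assoc, hvu, List.append_assoc]
  · rw [List.reverse_reverse, List.append_assoc, huv]
  · calc ((u ++ v) ++ (u ++ q)).reverse = u ++ q ++ (q ++ w).reverse := by
          rw [List.reverse_append, huq, ← huv, List.reverse_append]
      _ = u ++ (q ++ w.reverse) ++ q := by
          simp only [List.reverse_append, hq, List.append_assoc]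
      _ = (u ++ v) ++ (u ++ q) := by
          rw [← hvu]
          simp only [List.append_assoc]

theorem almostCommuting_fibonacci {t : ℕ → List α} {a b : α} (h0 : t 0 = [b]) (h1 : t 1 = [a])
    (hrec : ∀ k, 1 ≤ k → t (k + 1) = t k ++ t (k - 1)) (m : ℕ) :
    ∃ q, AlmostCommuting (t (m + 1)) (t m) q (if Even m then [a, b] else [b, a]) := by
  induction m with
  | zero => exact ⟨[], by simp [AlmostCommuting, h0, h1]⟩
  | succ m ih =>
    obtain ⟨q, hq⟩ := ih
    have hletters : (if Even m then [a, b] else [b, a]).reverse =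
        if Even (m + 1) then [a, b] else [b, a] := by
      rcases Nat.even_or_odd m with hm | hm <;> simp [hm, Nat.even_add_one]
    refine ⟨t (m + 1) ++ q, ?_⟩
    rw [hrec (m + 1) (by omega), Nat.add_sub_cancel, ← hletters]
    exact hq.append_left

theorem fibonacci_word_palindrome_suffix (t : ℕ → List (Fin 2))
    (h0 : t 0 = [1]) (h1 : t 1 = [0])
    (hrec : ∀ k, 1 ≤ k → t (k + 1) = t k ++ t (k - 1)) :
    ∀ n, 1 ≤ n → ∃ p : List (Fin 2), p.reverse = p ∧
      t (n + 1) = p ++ (if Odd n then [0, 1] else [1, 0]) := by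
  rintro (_ | m) hn
  · omega
  obtain ⟨q, hq, hsplit, -⟩ := almostCommuting_fibonacci h0 h1 hrec m
  refine ⟨q, hq, ?_⟩
  rw [hrec (m + 1) (by omega), Nat.add_sub_cancel, hsplit]
  simp only [Nat.odd_add_one, Nat.not_odd_iff_even]
end

section
/- For all n ≥ 1, the word a·p_n·b is the unique Lyndon word in the conjugacy class of the finite Fibonacci word f_n, where f_n = p_n·x·y with p_n a palindrome and xy ∈ {ab, ba}. -/
open scoped Classical

/-!
With `p_{m+1} = f_{m-1} ⋯ f_1 f_0`, the words `f_m f_{m-1}` and `f_{m-1} f_m` agree except for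
their last two letters, which are `ab` and `ba` in some order; hence `f_{m+1} = p_{m+1} x y` and
`p_{m+2} = p_m x y p_{m+1} = p_{m+1} y x p_m`. For `w_m = a p_{m+1} b` this gives
`w_{m+2} = w_m w_{m+1}` or `w_{m+1} w_m`, always with the lexicographically smaller factor first,
so every `w_m` is Lyndon because a product `u v` of Lyndon words with `u < v` is Lyndon. Either
`f_{m+1}` or its conjugate `f_{m-1} f_m` ends in `ba`, so `f_{m+1}` is conjugate to `w_m`, and
no other Lyndon word is, since a Lyndon word is smaller than all its nontrivial rotations.
-/

namespace List.Lex

variable {α : Type*} {r : α → α → Prop}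

theorem append_append_of_not_isPrefix {s t : List α} (h : Lex r s t) (hst : ¬s <+: t)
    (z z' : List α) : Lex r (s ++ z) (t ++ z') := by
  induction h with
  | nil => exact absurd List.nil_prefix hst
  | cons _ ih => exact .cons (ih fun hpre => hst (List.cons_prefix_cons.mpr ⟨rfl, hpre⟩))
  | rel h => exact .rel h

end List.Lex

namespace IsLyndon

variable {α : Type*} [LinearOrder α] {w s u v x y : List α}

theorem singleton (a : α) : IsLyndon [a] := by
  refine ⟨List.cons_ne_nil a [], fun v hv hne hvw => ?_⟩
  rcases List.suffix_cons_iff.mp hv with rfl | hv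
  · exact absurd rfl hvw
  · exact absurd (List.suffix_nil.mp hv) hne

/-- Being shorter, a proper suffix `s` of `w` cannot have `w` as a prefix, so `w < s` survives
arbitrary extensions of both sides. -/
theorem lex_append_of_isSuffix (hw : IsLyndon w) (hs : s <:+ w) (hne : s ≠ []) (hsw : s ≠ w)
    (z z' : List α) : List.Lex (· < ·) (w ++ z) (s ++ z') :=
  (hw.2 s hs hne hsw).append_append_of_not_isPrefix
    (fun hpre => hsw (hs.eq_of_length (le_antisymm hs.length_le hpre.length_le))) z z'

theorem lex_append_swap (hw : IsLyndon (x ++ y)) (hx : x ≠ []) (hy : y ≠ []) :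
    List.Lex (· < ·) (x ++ y) (y ++ x) := by
  have hyw : y ≠ x ++ y := fun h => hx (by simpa using congrArg List.length h)
  simpa using hw.lex_append_of_isSuffix (List.suffix_append x y) hy hyw [] x

theorem eq_of_isRotated (hw : IsLyndon w) (hu : IsLyndon u) (h : w ~r u) : u = w := by
  obtain ⟨k, rfl⟩ := h
  obtain ⟨x, y, rfl, hxy⟩ : ∃ x y, w = x ++ y ∧ w.rotate k = y ++ x :=
    ⟨_, _, (List.take_append_drop _ w).symm, List.rotate_eq_drop_append_take_mod⟩
  rw [hxy] at hu ⊢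
  by_cases hx : x = []
  · simp [hx]
  by_cases hy : y = []
  · simp [hy]
  exact absurd (hw.lex_append_swap hx hy) (asymm (hu.lex_append_swap hy hx))

theorem append (hu : IsLyndon u) (hv : IsLyndon v) (huv : List.Lex (· < ·) u v) :
    IsLyndon (u ++ v) := by
  refine ⟨by simp [hu.1], fun s hs hne hsuv => ?_⟩
  by_cases hsv : s <:+ v
  · have hus : List.Lex (· < ·) u s := by
      rcases eq_or_ne s v with rfl | hs'
      · exact huv
      · exact List.lex_trans lt_trans huv (hv.2 s hsv hne hs')
    by_cases hpre : u <+: s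
    · obtain ⟨r, rfl⟩ := hpre
      have hr : r ≠ [] := by
        rintro rfl
        simp at hus
      have hrv : r ≠ v := by
        rintro rfl
        exact hsuv rfl
      exact List.Lex.append_left _ (hv.2 r ((List.suffix_append u r).trans hsv) hr hrv) u
    · simpa using hus.append_append_of_not_isPrefix hpre v []
  · obtain ⟨s', rfl⟩ :=
      (List.suffix_or_suffix_of_suffix hs (List.suffix_append u v)).resolve_left hsv
    have hs' : s' ≠ [] := by
      rintro rfl
      exact hsv (List.suffix_refl v)
    have hs'u : s' ≠ u := by
      rintro rfl
      exact hsuv rfl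
    exact hu.lex_append_of_isSuffix (List.suffix_append_self_iff.mp hs) hs' hs'u v v

end IsLyndon

/-- `fibWord (n + 1)` is the Fibonacci word `f_n`; `fibWord 0 = f_{-1}`. -/
def fibWord : ℕ → List (Fin 2)
  | 0 => [1]
  | 1 => [0]
  | k + 2 => fibWord (k + 1) ++ fibWord k

theorem eq_fibWord {t : ℕ → List (Fin 2)} (h0 : t 0 = [1]) (h1 : t 1 = [0])
    (hrec : ∀ k, 1 ≤ k → t (k + 1) = t k ++ t (k - 1)) : t = fibWord := by
  funext k
  induction k using fibWord.induct with
  | case1 => exact h0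
  | case2 => exact h1
  | case3 k ih₁ ih₀ => rw [hrec (k + 1) (by omega), Nat.add_sub_cancel, ih₁, ih₀, fibWord]

/-- `fibPal m = f_{m-1} ⋯ f_1 f_0` is the palindrome `p_{m+1}`. -/
def fibPal : ℕ → List (Fin 2)
  | 0 => []
  | m + 1 => fibWord (m + 1) ++ fibPal m

def fibSuffix (m : ℕ) : List (Fin 2) := if Even m then [0, 1] else [1, 0]

theorem fibSuffix_of_even {m : ℕ} (h : Even m) : fibSuffix m = [0, 1] := if_pos h

theorem fibSuffix_of_odd {m : ℕ} (h : Odd m) : fibSuffix m = [1, 0] :=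
  if_neg (Nat.not_even_iff_odd.mpr h)

theorem fibSuffix_succ (m : ℕ) : fibSuffix (m + 1) = (fibSuffix m).reverse := by
  by_cases h : Even m <;> simp [fibSuffix, Nat.even_add_one, h]

theorem fibWord_append_fibWord (m : ℕ) :
    fibWord (m + 1) ++ fibWord m = fibPal m ++ fibSuffix m ∧
      fibWord m ++ fibWord (m + 1) = fibPal m ++ (fibSuffix m).reverse := by
  induction m with
  | zero => exact ⟨rfl, rfl⟩
  | succ m ih =>
    rw [fibSuffix_succ, List.reverse_reverse, fibPal, fibWord, List.append_assoc, ih.2,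
      List.append_assoc, ih.1]
    simp only [List.append_assoc, and_self]

theorem fibWord_add_two (m : ℕ) : fibWord (m + 2) = fibPal m ++ fibSuffix m :=
  (fibWord_append_fibWord m).1

theorem fibPal_add_two (m : ℕ) : fibPal (m + 2) = fibPal m ++ fibSuffix m ++ fibPal (m + 1) := by
  rw [fibPal, fibWord_add_two]

theorem fibPal_add_two' : ∀ m : ℕ,
    fibPal (m + 2) = fibPal (m + 1) ++ fibSuffix (m + 1) ++ fibPal m
  | 0 => rfl
  | m + 1 => calc
    fibPal (m + 3) = fibPal (m + 1) ++ fibSuffix (m + 1) ++ fibPal (m + 2) :=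
      fibPal_add_two (m + 1)
    _ = fibPal (m + 1) ++ fibSuffix (m + 1) ++ fibPal m ++ fibSuffix m ++ fibPal (m + 1) := by
      rw [fibPal_add_two m]; simp only [List.append_assoc]
    _ = fibPal (m + 2) ++ fibSuffix (m + 2) ++ fibPal (m + 1) := by
      rw [← fibPal_add_two' m, fibSuffix_succ, fibSuffix_succ, List.reverse_reverse]

def fibLyndon (m : ℕ) : List (Fin 2) := (0 : Fin 2) :: fibPal m ++ [1]

theorem fibPal_append_isRotated_fibLyndon (m : ℕ) : fibPal m ++ [1, 0] ~r fibLyndon m := by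
  rw [show fibPal m ++ [1, 0] = fibPal m ++ [1] ++ [0] by simp]
  exact List.isRotated_concat 0 (fibPal m ++ [1])

theorem fibWord_add_two_isRotated_fibLyndon (m : ℕ) : fibWord (m + 2) ~r fibLyndon m := by
  rcases Nat.even_or_odd m with h | h
  · have hswap : fibWord m ++ fibWord (m + 1) = fibPal m ++ [1, 0] := by
      rw [(fibWord_append_fibWord m).2, fibSuffix_of_even h]; rfl
    exact List.isRotated_append.trans (hswap ▸ fibPal_append_isRotated_fibLyndon m)
  · rw [fibWord_add_two, fibSuffix_of_odd h]
    exact fibPal_append_isRotated_fibLyndon m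

theorem fibLyndon_add_two_of_even {m : ℕ} (h : Even m) :
    fibLyndon (m + 2) = fibLyndon (m + 1) ++ fibLyndon m := by
  simp [fibLyndon, fibPal_add_two', fibSuffix_of_odd h.add_one]

theorem fibLyndon_add_two_of_odd {m : ℕ} (h : Odd m) :
    fibLyndon (m + 2) = fibLyndon m ++ fibLyndon (m + 1) := by
  simp [fibLyndon, fibPal_add_two, fibSuffix_of_odd h]

theorem fibLyndon_add_two_eq (m : ℕ) :
    fibLyndon (m + 2) = (0 : Fin 2) :: fibPal (m + 1) ++ (fibSuffix (m + 1) ++ fibPal m ++ [1]) := by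
  simp [fibLyndon, fibPal_add_two']

theorem fibLyndon_succ_lex_of_even {m : ℕ} (h : Even m) :
    List.Lex (· < ·) (fibLyndon (m + 1)) (fibLyndon m) := by
  rcases m with _ | j
  · decide
  · rw [fibLyndon_add_two_eq, fibSuffix_of_even h]
    exact List.Lex.append_left _ (.rel (by decide)) _

theorem fibLyndon_lex_succ_of_odd {m : ℕ} (h : Odd m) :
    List.Lex (· < ·) (fibLyndon m) (fibLyndon (m + 1)) := by
  obtain ⟨j, rfl⟩ : ∃ j, m = j + 1 := ⟨m - 1, by have := h.pos; omega⟩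
  rw [fibLyndon_add_two_eq, fibSuffix_of_odd h]
  exact List.Lex.append_left _ (.cons .nil) _

theorem isLyndon_fibLyndon : ∀ m : ℕ, IsLyndon (fibLyndon m)
  | 0 => (IsLyndon.singleton 0).append (.singleton 1) (by decide)
  | 1 => (IsLyndon.singleton 0).append (isLyndon_fibLyndon 0) (by decide)
  | m + 2 => by
    rcases Nat.even_or_odd m with h | h
    · rw [fibLyndon_add_two_of_even h]
      exact (isLyndon_fibLyndon (m + 1)).append (isLyndon_fibLyndon m)
        (fibLyndon_succ_lex_of_even h)
    · rw [fibLyndon_add_two_of_odd h]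
      exact (isLyndon_fibLyndon m).append (isLyndon_fibLyndon (m + 1))
        (fibLyndon_lex_succ_of_odd h)

theorem fibonacci_lyndon_rotation_general (t : ℕ → List (Fin 2))
    (h0 : t 0 = [1]) (h1 : t 1 = [0])
    (hrec : ∀ k, 1 ≤ k → t (k + 1) = t k ++ t (k - 1))
    (n : ℕ) (hn : 1 ≤ n) (p : List (Fin 2))
    (hpn : t (n + 1) = p ++ (if Odd n then [0, 1] else [1, 0])) :
    IsLyndon ((0 : Fin 2) :: p ++ [1]) ∧
    (∃ i, (t (n + 1)).rotate i = (0 : Fin 2) :: p ++ [1]) ∧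
    (∀ u : List (Fin 2), (∃ i, (t (n + 1)).rotate i = u) → IsLyndon u →
      u = (0 : Fin 2) :: p ++ [1]) := by
  obtain ⟨m, rfl⟩ : ∃ m, n = m + 1 := ⟨n - 1, by omega⟩
  obtain rfl := eq_fibWord h0 h1 hrec
  obtain rfl : p = fibPal m := by
    have hsuffix : (if Odd (m + 1) then [0, 1] else [1, 0]) = fibSuffix m := by
      simp [fibSuffix, Nat.odd_add_one]
    rw [hsuffix, fibWord_add_two] at hpn
    exact (List.append_cancel_right hpn).symm
  have hrot : fibWord (m + 2) ~r fibLyndon m := fibWord_add_two_isRotated_fibLyndon m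
  have hlyn : IsLyndon (fibLyndon m) := isLyndon_fibLyndon m
  exact ⟨hlyn, hrot, fun u hu hu' => hlyn.eq_of_isRotated hu' (hrot.symm.trans hu)⟩

theorem fibonacci_lyndon_rotation (t : ℕ → List (Fin 2))
    (h0 : t 0 = [1]) (h1 : t 1 = [0])
    (hrec : ∀ k, 1 ≤ k → t (k + 1) = t k ++ t (k - 1))
    (n : ℕ) (hn : 1 ≤ n) (p : List (Fin 2)) (hp : p.reverse = p)
    (hpn : t (n + 1) = p ++ (if Odd n then [0, 1] else [1, 0])) :
    IsLyndon ((0 : Fin 2) :: p ++ [1]) ∧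
    (∃ i, (t (n + 1)).rotate i = (0 : Fin 2) :: p ++ [1]) ∧
    (∀ u : List (Fin 2), (∃ i, (t (n + 1)).rotate i = u) → IsLyndon u →
      u = (0 : Fin 2) :: p ++ [1]) :=
  fibonacci_lyndon_rotation_general t h0 h1 hrec n hn p hpn
end
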